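/- arXiv:2007.01086 — 2 statements merged into one kernel-verified Lean document; each statement's English description precedes it below -/
import Mathlib

section
/- Let n ≥ 1, 1 ≤ k ≤ n, and 1 ≤ ℓ ≤ 2^k − 2. Then there is a bijection between the set of constructive ordered k-covers A of Fin n such that exactly ℓ of the regions B_t(A), t ∈ 𝕋(k), are nonempty, and the Cartesian product S̃(n,ℓ) × F(k,ℓ). -/
/-- `𝕋(k)`: all non-constant index vectors `t : Fin k → Bool`
(`c ↔ true`, `e ↔ false`), i.e. all vectors except the all-`e` and all-`c` ones. -/
def TT (k : ℕ) : Finset (Fin k → Bool) :=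
  Finset.univ.filter fun t => (∃ i, t i = true) ∧ (∃ i, t i = false)

/-- A constructive ordered `k`-cover of `Fin n`: the sets cover `Fin n` and no one
is contained in another. -/
def IsCCover (n k : ℕ) (A : Fin k → Finset (Fin n)) : Prop :=
  Finset.univ.biUnion A = Finset.univ ∧ ∀ i j : Fin k, i ≠ j → (A i \ A j).Nonempty

/-- The region `B_t(A) = (⋂_{i : t i = c} A i) ∩ (⋂_{i : t i = e} (A i)ᶜ)`. -/
def region {n k : ℕ} (A : Fin k → Finset (Fin n)) (t : Fin k → Bool) : Finset (Fin n) :=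
  Finset.univ.filter fun p => ∀ i, p ∈ A i ↔ t i = true

/-- A `(k,ℓ)`-labeling: `x : 𝕋(k) → Bool` such that for all `i ≠ j` there is
`t ∈ 𝕋(k)` with `t i = c`, `t j = e` and `x t = true`, and exactly `ℓ` of the
`t ∈ 𝕋(k)` are labeled `true`. -/
def IsLabeling (k ℓ : ℕ) (x : ↥(TT k) → Bool) : Prop :=
  (∀ i j : Fin k, i ≠ j →
      ∃ t : ↥(TT k), t.1 i = true ∧ t.1 j = false ∧ x t = true) ∧
  (Finset.univ.filter fun t : ↥(TT k) => x t = true).card = ℓ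


/-!
The regions `B_t(A)` are the fibres of the map sending a point `p` to its type
`i ↦ (p ∈ A i)`, so a cover is determined by its nonempty regions together with their types.
Covering rules out the all-`e` type, and the all-`c` region is whatever the other regions leave
over. Enumerating the `ℓ` types in `𝕋(k)` with a nonempty region, in an order that depends only
on the set of these types, turns `A` into `ℓ` disjoint nonempty blocks together with the labeling
that marks those types; constructiveness of `A` is exactly condition (a) on the labeling.
-/

open Finset

namespace CCover

variable {n k : ℕ}

lemma mem_TT {t : Fin k → Bool} : t ∈ TT k ↔ (∃ i, t i = true) ∧ ∃ i, t i = false := by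
  simp [TT]

lemma exists_eq_false_iff_ne_true {t : Fin k → Bool} :
    (∃ i, t i = false) ↔ t ≠ fun _ => true := by
  simp [funext_iff]

lemma ne_true_of_mem_TT {t : Fin k → Bool} (ht : t ∈ TT k) : t ≠ fun _ => true :=
  exists_eq_false_iff_ne_true.1 (mem_TT.1 ht).2

def typeOf (A : Fin k → Finset (Fin n)) (p : Fin n) : Fin k → Bool :=
  fun i => decide (p ∈ A i)

variable {A A' : Fin k → Finset (Fin n)} {t t' : Fin k → Bool} {p : Fin n}

lemma mem_iff_typeOf {i : Fin k} : p ∈ A i ↔ typeOf A p i = true := by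
  simp [typeOf]

lemma mem_region_iff : p ∈ region A t ↔ typeOf A p = t := by
  simp only [region, typeOf, mem_filter, mem_univ, true_and, funext_iff]
  exact forall_congr' fun i => by cases t i <;> simp

lemma mem_region_typeOf (A : Fin k → Finset (Fin n)) (p : Fin n) : p ∈ region A (typeOf A p) :=
  mem_region_iff.2 rfl

lemma region_inter_region (h : t ≠ t') : region A t ∩ region A t' = ∅ := by
  ext p
  simp only [mem_inter, mem_region_iff, notMem_empty, iff_false]
  rintro ⟨rfl, rfl⟩
  exact h rfl

lemma eq_of_typeOf_eq (h : ∀ p, typeOf A p = typeOf A' p) : A = A' := by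
  funext i
  ext p
  simp only [mem_iff_typeOf, h]

lemma typeOf_mem_TT (hA : IsCCover n k A) (hp : typeOf A p ≠ fun _ => true) :
    typeOf A p ∈ TT k := by
  obtain ⟨i, -, hi⟩ := mem_biUnion.1 (hA.1 ▸ mem_univ p)
  exact mem_TT.2 ⟨⟨i, mem_iff_typeOf.1 hi⟩, exists_eq_false_iff_ne_true.2 hp⟩

def labelOf (A : Fin k → Finset (Fin n)) (t : TT k) : Bool :=
  decide (region A t).Nonempty

lemma labelOf_eq_true {t : TT k} : labelOf A t = true ↔ (region A t).Nonempty :=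
  decide_eq_true_iff

lemma card_labelOf_eq_true (A : Fin k → Finset (Fin n)) :
    #{t | labelOf A t = true} = #{t ∈ TT k | (region A t).Nonempty} := by
  rw [← card_map (Function.Embedding.subtype _)]
  congr 1
  ext t
  simp [labelOf, and_comm]

lemma isLabeling_labelOf {ℓ : ℕ} (hA : IsCCover n k A)
    (hcard : #{t ∈ TT k | (region A t).Nonempty} = ℓ) : IsLabeling k ℓ (labelOf A) := by
  refine ⟨fun i j hij => ?_, (card_labelOf_eq_true A).trans hcard⟩
  obtain ⟨p, hp⟩ := hA.2 i j hij
  rw [mem_sdiff, mem_iff_typeOf, mem_iff_typeOf, Bool.not_eq_true] at hp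
  have hmem : typeOf A p ∈ TT k := typeOf_mem_TT hA fun h => by simp [h] at hp
  exact ⟨⟨_, hmem⟩, hp.1, hp.2, labelOf_eq_true.2 ⟨p, mem_region_typeOf A p⟩⟩

section OfBlocks

variable {ι : Type*} {B : ι → Finset (Fin n)} {τ : ι → Fin k → Bool} {j : ι}

lemma eq_of_mem_of_mem (hB : ∀ j j', j ≠ j' → B j ∩ B j' = ∅) {j' : ι} (hj : p ∈ B j)
    (hj' : p ∈ B j') : j = j' := by
  by_contra hne
  simpa [hB j j' hne] using mem_inter.2 ⟨hj, hj'⟩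

variable [Fintype ι]

/-- The block `B j` becomes the region of type `τ j`, and the points outside every block form
the all-`c` region, which `𝕋(k)` does not count. -/
def ofBlocks (B : ι → Finset (Fin n)) (τ : ι → Fin k → Bool) : Fin k → Finset (Fin n) :=
  fun i => {p | ∀ j, p ∈ B j → τ j i = true}

lemma typeOf_ofBlocks_of_mem (hB : ∀ j j', j ≠ j' → B j ∩ B j' = ∅) (hp : p ∈ B j) :
    typeOf (ofBlocks B τ) p = τ j := by
  funext i
  rw [typeOf, Bool.eq_iff_iff, decide_eq_true_iff]
  simp only [ofBlocks, mem_filter, mem_univ, true_and]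
  refine ⟨fun h => h j hp, fun h j' hj' => ?_⟩
  rwa [← eq_of_mem_of_mem hB hp hj']

lemma typeOf_ofBlocks_of_forall_notMem (hp : ∀ j, p ∉ B j) :
    typeOf (ofBlocks B τ) p = fun _ => true := by
  funext i
  simp [typeOf, ofBlocks, hp]

lemma mem_region_ofBlocks (hB : ∀ j j', j ≠ j' → B j ∩ B j' = ∅) (ht : t ≠ fun _ => true) :
    p ∈ region (ofBlocks B τ) t ↔ ∃ j, p ∈ B j ∧ τ j = t := by
  rw [mem_region_iff]
  by_cases hp : ∃ j, p ∈ B j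
  · obtain ⟨j, hj⟩ := hp
    rw [typeOf_ofBlocks_of_mem hB hj]
    refine ⟨fun h => ⟨j, hj, h⟩, ?_⟩
    rintro ⟨j', hj', rfl⟩
    rw [eq_of_mem_of_mem hB hj hj']
  · push Not at hp
    rw [typeOf_ofBlocks_of_forall_notMem hp]
    simp [hp, Ne.symm ht]

lemma region_ofBlocks_apply (hB : ∀ j j', j ≠ j' → B j ∩ B j' = ∅)
    (hτ : Function.Injective τ) (hj : τ j ≠ fun _ => true) :
    region (ofBlocks B τ) (τ j) = B j := by
  ext p
  rw [mem_region_ofBlocks hB hj]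
  exact ⟨fun ⟨_, hp, h⟩ => hτ h ▸ hp, fun hp => ⟨j, hp, rfl⟩⟩

lemma region_ofBlocks_nonempty_iff (hBne : ∀ j, (B j).Nonempty)
    (hB : ∀ j j', j ≠ j' → B j ∩ B j' = ∅) (ht : t ≠ fun _ => true) :
    (region (ofBlocks B τ) t).Nonempty ↔ t ∈ Set.range τ := by
  constructor
  · rintro ⟨p, hp⟩
    obtain ⟨j, -, rfl⟩ := (mem_region_ofBlocks hB ht).1 hp
    exact ⟨j, rfl⟩
  · rintro ⟨j, rfl⟩
    obtain ⟨p, hp⟩ := hBne j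
    exact ⟨p, (mem_region_ofBlocks hB ht).2 ⟨j, hp, rfl⟩⟩

lemma isCCover_ofBlocks (hk : 1 ≤ k) (hBne : ∀ j, (B j).Nonempty)
    (hB : ∀ j j', j ≠ j' → B j ∩ B j' = ∅) (hτ : ∀ j, τ j ∈ TT k)
    (hsep : ∀ i i', i ≠ i' → ∃ j, τ j i = true ∧ τ j i' = false) :
    IsCCover n k (ofBlocks B τ) := by
  refine ⟨eq_univ_of_forall fun p => mem_biUnion.2 ?_, fun i i' hii' => ?_⟩
  · by_cases hp : ∃ j, p ∈ B j
    · obtain ⟨j, hj⟩ := hp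
      obtain ⟨i, hi⟩ := (mem_TT.1 (hτ j)).1
      exact ⟨i, mem_univ i, mem_iff_typeOf.2 (by rwa [typeOf_ofBlocks_of_mem hB hj])⟩
    · push Not at hp
      exact ⟨⟨0, hk⟩, mem_univ _, mem_iff_typeOf.2 (by rw [typeOf_ofBlocks_of_forall_notMem hp])⟩
  · obtain ⟨j, hi, hi'⟩ := hsep i i' hii'
    obtain ⟨p, hp⟩ := hBne j
    refine ⟨p, mem_sdiff.2 ⟨mem_iff_typeOf.2 ?_, fun h => ?_⟩⟩
    · rwa [typeOf_ofBlocks_of_mem hB hp]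
    · simp [mem_iff_typeOf, typeOf_ofBlocks_of_mem hB hp, hi'] at h

lemma ofBlocks_region_eq_self (hA : IsCCover n k A) (hτ : ∀ j, τ j ∈ TT k)
    (hτinj : Function.Injective τ)
    (hrange : ∀ t ∈ TT k, (region A t).Nonempty → t ∈ Set.range τ) :
    ofBlocks (fun j => region A (τ j)) τ = A := by
  have hB : ∀ j j', j ≠ j' → region A (τ j) ∩ region A (τ j') = ∅ :=
    fun j j' h => region_inter_region (hτinj.ne h)
  refine eq_of_typeOf_eq fun p => ?_
  by_cases htop : typeOf A p = fun _ => true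
  · rw [htop, typeOf_ofBlocks_of_forall_notMem fun j hp => ?_]
    rw [mem_region_iff, htop] at hp
    exact ne_true_of_mem_TT (hτ j) hp.symm
  · obtain ⟨j, hj⟩ := hrange _ (typeOf_mem_TT hA htop) ⟨p, mem_region_typeOf A p⟩
    rw [typeOf_ofBlocks_of_mem hB (hj ▸ mem_region_typeOf A p : p ∈ region A (τ j)), hj]

end OfBlocks

section Enumeration

variable {β : Type*} [Fintype β] {ℓ : ℕ}

noncomputable def enumTrue (x : β → Bool) (hx : #{b | x b = true} = ℓ) : Fin ℓ → β :=
  fun j => ((equivFinOfCardEq hx).symm j).1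

variable {x : β → Bool} {hx : #{b | x b = true} = ℓ}

lemma enumTrue_injective : Function.Injective (enumTrue x hx) :=
  Subtype.val_injective.comp (equivFinOfCardEq hx).symm.injective

lemma mem_range_enumTrue {b : β} : b ∈ Set.range (enumTrue x hx) ↔ x b = true := by
  refine ⟨?_, fun hb => ⟨equivFinOfCardEq hx ⟨b, by simpa using hb⟩, by simp [enumTrue]⟩⟩
  rintro ⟨j, rfl⟩
  exact (mem_filter.1 ((equivFinOfCardEq hx).symm j).2).2

lemma enumTrue_congr {x' : β → Bool} (h : x = x') (hx' : #{b | x' b = true} = ℓ) :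
    enumTrue x hx = enumTrue x' hx' := by
  subst h
  rfl

end Enumeration

section Bijection

variable (n k ℓ : ℕ)

abbrev RegionCover : Type :=
  {A : Fin k → Finset (Fin n) // IsCCover n k A ∧ #{t ∈ TT k | (region A t).Nonempty} = ℓ}

abbrev OrderedPartialPartition : Type :=
  {B : Fin ℓ → Finset (Fin n) // (∀ i, (B i).Nonempty) ∧ ∀ i j, i ≠ j → B i ∩ B j = ∅}

abbrev Labeling : Type := {x : ↥(TT k) → Bool // IsLabeling k ℓ x}

variable {n k ℓ}

noncomputable def toPartitionLabeling (A : RegionCover n k ℓ) :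
    OrderedPartialPartition n ℓ × Labeling k ℓ :=
  let hx := isLabeling_labelOf A.2.1 A.2.2
  let τ := enumTrue (labelOf A.1) hx.2
  (⟨fun j => region A.1 (τ j),
    fun j => labelOf_eq_true.1 (mem_range_enumTrue.1 ⟨j, rfl⟩),
    fun _ _ h => region_inter_region fun h' => h (enumTrue_injective (Subtype.ext h'))⟩,
   ⟨labelOf A.1, hx⟩)

lemma labelOf_ofBlocks_enumTrue {B : Fin ℓ → Finset (Fin n)} (hBne : ∀ j, (B j).Nonempty)
    (hB : ∀ j j', j ≠ j' → B j ∩ B j' = ∅) {x : TT k → Bool} (hx : IsLabeling k ℓ x) :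
    labelOf (ofBlocks B fun j => (enumTrue x hx.2 j).1) = x := by
  funext t
  rw [Bool.eq_iff_iff, labelOf_eq_true, region_ofBlocks_nonempty_iff hBne hB
    (ne_true_of_mem_TT t.2)]
  simp only [Set.mem_range, ← Subtype.ext_iff]
  exact mem_range_enumTrue

noncomputable def ofPartitionLabeling (hk : 1 ≤ k)
    (b : OrderedPartialPartition n ℓ × Labeling k ℓ) : RegionCover n k ℓ :=
  ⟨ofBlocks b.1.1 fun j => (enumTrue b.2.1 b.2.2.2 j).1,
    isCCover_ofBlocks hk b.1.2.1 b.1.2.2 (fun j => (enumTrue b.2.1 b.2.2.2 j).2) fun i i' h => by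
      obtain ⟨t, hi, hi', ht⟩ := b.2.2.1 i i' h
      obtain ⟨j, rfl⟩ := mem_range_enumTrue (hx := b.2.2.2) |>.2 ht
      exact ⟨j, hi, hi'⟩,
    by rw [← card_labelOf_eq_true, labelOf_ofBlocks_enumTrue b.1.2.1 b.1.2.2 b.2.2]
       exact b.2.2.2⟩

noncomputable def regionCoverEquiv (hk : 1 ≤ k) :
    RegionCover n k ℓ ≃ OrderedPartialPartition n ℓ × Labeling k ℓ where
  toFun := toPartitionLabeling
  invFun := ofPartitionLabeling hk
  left_inv A := Subtype.ext <| ofBlocks_region_eq_self A.2.1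
    (fun j => (enumTrue (labelOf A.1) (isLabeling_labelOf A.2.1 A.2.2).2 j).2)
    (fun _ _ h => enumTrue_injective (Subtype.ext h)) fun t ht hne => by
      obtain ⟨j, hj⟩ := mem_range_enumTrue.2 (labelOf_eq_true (t := ⟨t, ht⟩) |>.2 hne)
      exact ⟨j, congrArg Subtype.val hj⟩
  right_inv := by
    rintro ⟨⟨B, hBne, hB⟩, ⟨x, hx⟩⟩
    have hlabel := labelOf_ofBlocks_enumTrue hBne hB hx
    refine Prod.ext (Subtype.ext (funext fun j => ?_)) (Subtype.ext hlabel)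
    simp only [toPartitionLabeling, ofPartitionLabeling]
    rw [enumTrue_congr hlabel hx.2]
    exact region_ofBlocks_apply hB (fun _ _ h => enumTrue_injective (Subtype.ext h))
      (ne_true_of_mem_TT (enumTrue x hx.2 j).2)

end Bijection

end CCover

theorem ccover_equiv_partitions_prod_labelings_general (n k ℓ : ℕ) (hk1 : 1 ≤ k) :
    Nonempty (
      {A : Fin k → Finset (Fin n) // IsCCover n k A ∧
          ((TT k).filter fun t => (region A t).Nonempty).card = ℓ} ≃
      ({B : Fin ℓ → Finset (Fin n) //
          (∀ i, (B i).Nonempty) ∧ ∀ i j, i ≠ j → B i ∩ B j = ∅} ×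
        {x : ↥(TT k) → Bool // IsLabeling k ℓ x})) :=
  ⟨CCover.regionCoverEquiv hk1⟩

/-- There is a bijection between the constructive ordered `k`-covers of `Fin n` with
exactly `ℓ` nonempty regions `B_t(A)`, `t ∈ 𝕋(k)`, and `S̃(n,ℓ) × F(k,ℓ)`. -/
theorem ccover_equiv_partitions_prod_labelings (n k ℓ : ℕ)
    (hn : 1 ≤ n) (hk1 : 1 ≤ k) (hkn : k ≤ n) (hℓ1 : 1 ≤ ℓ) (hℓ2 : ℓ ≤ 2 ^ k - 2) :
    Nonempty (
      {A : Fin k → Finset (Fin n) // IsCCover n k A ∧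
          ((TT k).filter fun t => (region A t).Nonempty).card = ℓ} ≃
      ({B : Fin ℓ → Finset (Fin n) //
          (∀ i, (B i).Nonempty) ∧ ∀ i j, i ≠ j → B i ∩ B j = ∅} ×
        {x : ↥(TT k) → Bool // IsLabeling k ℓ x})) :=
  ccover_equiv_partitions_prod_labelings_general n k ℓ hk1
end

section
/- Let n ≥ 1 and 2 ≤ k ≤ n. Then |C(n,k)| = ∑_{ℓ=ℓ₀(k)}^{min(2^k−2, n)} s̃ℤ(n,ℓ) · |F(k,ℓ)| (the identity holding in ℤ after casting cardinalities). -/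
/-!
Encode a family `A` by the map sending each point `p` to its index vector `i ↦ (p ∈ A i)`.
Then `A` covers iff no point gets the all-`e` vector, and `A` is constructive iff the set `x` of
non-constant index vectors that occur satisfies condition (a) of a labeling. Grouping the covers
by `x`, the covers over a fixed labeling `x` are the maps from `Fin n` to `x ∪ {all-c}` that hit
every vector of `x`; inclusion–exclusion counts them as `s̃ℤ(n, |x|)`. Labelings of size `ℓ`
exist only for `ℓ₀(k) ≤ ℓ ≤ 2^k - 2`, and `s̃ℤ(n, ℓ)` is the `ℓ`-th forward difference of the
degree-`n` polynomial `(r + 1)^n`, so it vanishes for `ℓ > n`.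
-/

/-- Scaled integrated Stirling number: `ℓ! · s̃(n,ℓ)`. -/
def stZ (n ℓ : ℕ) : ℤ :=
  ∑ j ∈ Finset.range (ℓ + 1), (-1 : ℤ) ^ (ℓ - j) * (ℓ.choose j : ℤ) * ((j : ℤ) + 1) ^ n

/-- `ℓ₀(k)`: the minimal cardinality of a subset `T ⊆ 𝕋(k)` such that for all
`i ≠ j` there is `t ∈ T` with `t i = c` and `t j = e`. -/
noncomputable def ell0 (k : ℕ) : ℕ :=
  sInf {m : ℕ | ∃ T : Finset (Fin k → Bool), T ⊆ TT k ∧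
    (∀ i j : Fin k, i ≠ j → ∃ t ∈ T, t i = true ∧ t j = false) ∧ T.card = m}

open Finset fwdDiff

theorem stZ_eq_fwdDiff_iter (n ℓ : ℕ) : stZ n ℓ = (Δ_[1])^[ℓ] (fun r : ℤ => (r + 1) ^ n) 0 := by
  rw [fwdDiff_iter_eq_sum_shift, stZ]
  refine sum_congr rfl fun j _ => ?_
  simp

theorem stZ_eq_zero_of_lt {n ℓ : ℕ} (h : n < ℓ) : stZ n ℓ = 0 := by
  rw [stZ_eq_fwdDiff_iter, fwdDiff_iter_comp_add (1 : ℤ) (fun r : ℤ => r ^ n) 1 ℓ 0,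
    fwdDiff_iter_pow_eq_zero_of_lt h, Pi.zero_apply]

theorem sum_powerset_neg_one_pow_mul_pow_card_sub {β : Type*} (S : Finset β) (n : ℕ) :
    ∑ t ∈ S.powerset, (-1 : ℤ) ^ #t * ((#S + 1 - #t : ℕ) : ℤ) ^ n = stZ n #S := by
  rw [sum_powerset_apply_card (fun m => (-1 : ℤ) ^ m * ((#S + 1 - m : ℕ) : ℤ) ^ n),
    ← sum_range_reflect, stZ]
  refine sum_congr rfl fun j hj => ?_
  have hj : j ≤ #S := Nat.lt_succ_iff.mp (mem_range.mp hj)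
  rw [Nat.choose_symm_of_eq_add (by omega : #S = #S + 1 - 1 - j + j), nsmul_eq_mul,
    show #S + 1 - (#S + 1 - 1 - j) = j + 1 by omega, show #S + 1 - 1 - j = #S - j by omega]
  push_cast
  ring

theorem card_fun_mem (α : Type*) {β : Type*} [Fintype α] [DecidableEq α] [Fintype β]
    [DecidableEq β] (E : Finset β) : #{f : α → β | ∀ a, f a ∈ E} = #E ^ Fintype.card α := by
  have : ({f : α → β | ∀ a, f a ∈ E} : Finset _) = Fintype.piFinset fun _ => E := by
    ext f
    simp [Fintype.mem_piFinset]
  rw [this, Fintype.card_piFinset, prod_const, card_univ]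

theorem card_maps_into_insert_onto_eq_stZ {α β : Type*} [Fintype α] [DecidableEq α] [Fintype β]
    [DecidableEq β] {b₀ : β} {S : Finset β} (hb : b₀ ∉ S) :
    (#{f : α → β | (∀ a, f a ∈ insert b₀ S) ∧ ∀ s ∈ S, ∃ a, f a = s} : ℤ) =
      stZ (Fintype.card α) #S := by
  let misses : β → Finset (α → β) := fun s => {f | ∀ a, f a ≠ s}
  have hhits : ({f : α → β | (∀ a, f a ∈ insert b₀ S) ∧ ∀ s ∈ S, ∃ a, f a = s} : Finset _) =
      {f ∈ S.inf fun s => (misses s)ᶜ | ∀ a, f a ∈ insert b₀ S} := by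
    ext f
    simp [misses, mem_inf, and_comm]
  have hmisses (t : Finset β) :
      ({f ∈ t.inf misses | ∀ a, f a ∈ insert b₀ S} : Finset (α → β)) =
        ({f : α → β | ∀ a, f a ∈ insert b₀ S \ t} : Finset (α → β)) := by
    ext f
    simp only [mem_filter, mem_univ, true_and, mem_inf, misses, mem_sdiff]
    rw [forall_and, and_comm]
    exact and_congr_right' ⟨fun h a ha => h _ ha a rfl, fun h i hi a hai => h a (hai ▸ hi)⟩
  have hcard (t : Finset β) (ht : t ⊆ S) : #(insert b₀ S \ t) = #S + 1 - #t := by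
    rw [card_sdiff_of_subset (ht.trans (subset_insert _ _)), card_insert_of_notMem hb]
  rw [hhits, card_filter, Nat.cast_sum, ← sum_powerset_neg_one_pow_mul_pow_card_sub]
  push_cast
  rw [inclusion_exclusion_sum_inf_compl]
  refine sum_congr rfl fun t ht => ?_
  rw [mem_powerset] at ht
  rw [sum_boole, smul_eq_mul, hmisses, card_fun_mem, hcard t ht]
  norm_cast

def indexVectorEquiv (ι α : Type*) [Fintype α] [DecidableEq α] :
    (ι → Finset α) ≃ (α → ι → Bool) where
  toFun A p i := decide (p ∈ A i)
  invFun v i := {p | v p i}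
  left_inv A := by ext; simp
  right_inv v := by ext; simp

theorem card_TT {k : ℕ} (hk : 0 < k) : #(TT k) = 2 ^ k - 2 := by
  have hTT : TT k = univ \ {fun _ => false, fun _ => true} := by
    ext t
    simp [TT, funext_iff, and_comm]
  have hne : (fun _ => false : Fin k → Bool) ≠ fun _ => true :=
    fun h => Bool.false_ne_true (congrFun h ⟨0, hk⟩)
  rw [hTT, card_sdiff_of_subset (subset_univ _), card_univ, card_pair hne]
  simp

theorem mem_TT {k : ℕ} {t : Fin k → Bool} : t ∈ TT k ↔ (∃ i, t i = true) ∧ ∃ i, t i = false := by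
  simp [TT]

section Labelings

variable {n k : ℕ}

def Separates (k : ℕ) (x : ↥(TT k) → Bool) : Prop :=
  ∀ i j : Fin k, i ≠ j → ∃ t : ↥(TT k), t.1 i = true ∧ t.1 j = false ∧ x t = true

instance : DecidablePred (Separates k) := fun _ => by unfold Separates; infer_instance

instance (ℓ : ℕ) : DecidablePred (IsLabeling k ℓ) := fun _ => by unfold IsLabeling; infer_instance

instance : DecidablePred (IsCCover n k) := fun _ => by unfold IsCCover; infer_instance

def labelSupport (x : ↥(TT k) → Bool) : Finset (Fin k → Bool) :=
  ({t | x t = true} : Finset ↥(TT k)).map (Function.Embedding.subtype _)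

theorem mem_labelSupport {x : ↥(TT k) → Bool} {t : Fin k → Bool} :
    t ∈ labelSupport x ↔ ∃ h : t ∈ TT k, x ⟨t, h⟩ = true := by
  simp [labelSupport]

theorem labelSupport_subset (x : ↥(TT k) → Bool) : labelSupport x ⊆ TT k := fun _ ht =>
  (mem_labelSupport.mp ht).1

theorem card_labelSupport (x : ↥(TT k) → Bool) :
    #(labelSupport x) = #{t | x t = true} :=
  card_map _

theorem ell0_le_card_labelSupport {x : ↥(TT k) → Bool} (hx : Separates k x) :
    ell0 k ≤ #(labelSupport x) := by
  refine Nat.sInf_le ⟨labelSupport x, labelSupport_subset x, fun i j hij => ?_, rfl⟩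
  obtain ⟨t, hti, htj, hxt⟩ := hx i j hij
  exact ⟨t.1, mem_labelSupport.mpr ⟨t.2, hxt⟩, hti, htj⟩

theorem card_true_mem_Icc (hk : 0 < k) {x : ↥(TT k) → Bool} (hx : Separates k x) :
    #{t | x t = true} ∈ Icc (ell0 k) (2 ^ k - 2) := by
  rw [← card_labelSupport, ← card_TT hk]
  exact mem_Icc.mpr ⟨ell0_le_card_labelSupport hx, card_le_card (labelSupport_subset x)⟩

def labelOf (A : Fin k → Finset (Fin n)) (t : ↥(TT k)) : Bool :=
  decide (∃ p, indexVectorEquiv _ _ A p = t.1)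

theorem isCCover_iff (A : Fin k → Finset (Fin n)) :
    IsCCover n k A ↔ (∀ p, ∃ i, indexVectorEquiv _ _ A p i = true) ∧
      ∀ i j, i ≠ j →
        ∃ p, indexVectorEquiv _ _ A p i = true ∧ indexVectorEquiv _ _ A p j = false := by
  simp [IsCCover, indexVectorEquiv, eq_univ_iff_forall, Finset.Nonempty]

theorem separates_labelOf {A : Fin k → Finset (Fin n)} (hA : IsCCover n k A) :
    Separates k (labelOf A) := by
  intro i j hij
  obtain ⟨p, hpi, hpj⟩ := ((isCCover_iff A).mp hA).2 i j hij
  exact ⟨⟨_, mem_TT.mpr ⟨⟨i, hpi⟩, ⟨j, hpj⟩⟩⟩, hpi, hpj, decide_eq_true ⟨p, rfl⟩⟩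

theorem labelOf_eq_true_iff {A : Fin k → Finset (Fin n)} {t : ↥(TT k)} :
    labelOf A t = true ↔ ∃ p, indexVectorEquiv _ _ A p = t.1 :=
  decide_eq_true_iff

theorem isCCover_and_labelOf_eq_iff (hk : 0 < k) {x : ↥(TT k) → Bool} (hx : Separates k x)
    (A : Fin k → Finset (Fin n)) :
    IsCCover n k A ∧ labelOf A = x ↔
      (∀ p, indexVectorEquiv _ _ A p ∈ insert (fun _ => true) (labelSupport x)) ∧
        ∀ s ∈ labelSupport x, ∃ p, indexVectorEquiv _ _ A p = s := by
  rw [isCCover_iff]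
  set v := indexVectorEquiv _ _ A
  constructor
  · rintro ⟨⟨hcov, -⟩, rfl⟩
    refine ⟨fun p => ?_, fun s hs => ?_⟩
    · by_cases hall : ∀ i, v p i = true
      · exact mem_insert.mpr (.inl (funext hall))
      · have hp : v p ∈ TT k := mem_TT.mpr ⟨hcov p, by simpa using hall⟩
        exact mem_insert_of_mem (mem_labelSupport.mpr ⟨hp, labelOf_eq_true_iff.mpr ⟨p, rfl⟩⟩)
    · obtain ⟨hs, hxs⟩ := mem_labelSupport.mp hs
      exact labelOf_eq_true_iff.mp hxs
  · rintro ⟨hmaps, hsurj⟩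
    refine ⟨⟨fun p => ?_, fun i j hij => ?_⟩, funext fun t => Bool.eq_iff_iff.mpr ?_⟩
    · rcases mem_insert.mp (hmaps p) with hp | hp
      · exact ⟨⟨0, hk⟩, by rw [hp]⟩
      · exact (mem_TT.mp (labelSupport_subset x hp)).1
    · obtain ⟨t, hti, htj, hxt⟩ := hx i j hij
      obtain ⟨p, hp⟩ := hsurj t.1 (mem_labelSupport.mpr ⟨t.2, hxt⟩)
      exact ⟨p, hp ▸ hti, hp ▸ htj⟩
    · rw [labelOf_eq_true_iff]
      constructor
      · rintro ⟨p, hp⟩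
        change v p = t.1 at hp
        rcases mem_insert.mp (hmaps p) with hone | hsupp
        · obtain ⟨i, hi⟩ := (mem_TT.mp t.2).2
          simp [← hp, hone] at hi
        · exact (mem_labelSupport.mp (hp ▸ hsupp)).2
      · exact fun hxt => hsurj t.1 (mem_labelSupport.mpr ⟨t.2, hxt⟩)

end Labelings

theorem sum_comp_eq_sum_mul_card_fiber {ι κ M : Type*} [DecidableEq κ] [NonAssocSemiring M]
    (s : Finset ι) (g : ι → κ) (f : κ → M) (I : Finset κ) (hI : ∀ x ∈ s, g x ∉ I → f (g x) = 0) :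
    ∑ x ∈ s, f (g x) = ∑ ℓ ∈ I, f ℓ * #{x ∈ s | g x = ℓ} := by
  rw [← sum_filter_of_ne fun x hx hfx => not_imp_comm.mp (hI x hx) hfx,
    ← sum_fiberwise_eq_sum_filter']
  simp_rw [sum_const, nsmul_eq_mul']

theorem card_ccover_eq_sum_separates {n k : ℕ} (hk : 0 < k) :
    (Nat.card {A : Fin k → Finset (Fin n) // IsCCover n k A} : ℤ) =
      ∑ x ∈ {x | Separates k x}, stZ n #{t | x t = true} := by
  rw [Nat.card_eq_fintype_card, Fintype.card_subtype,
    card_eq_sum_card_fiberwise (t := {x | Separates k x}) (f := labelOf)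
      fun A hA => mem_filter.mpr ⟨mem_univ _, separates_labelOf (mem_filter.mp hA).2⟩]
  push_cast
  refine sum_congr rfl fun x hx => ?_
  have hone : (fun _ => true) ∉ labelSupport x := fun h => by
    simpa using (mem_TT.mp (labelSupport_subset x h)).2
  rw [filter_filter, ← card_labelSupport]
  calc (#{A | IsCCover n k A ∧ labelOf A = x} : ℤ)
      = #{v : Fin n → Fin k → Bool | (∀ p, v p ∈ insert (fun _ => true) (labelSupport x)) ∧
          ∀ s ∈ labelSupport x, ∃ p, v p = s} := by
        congr 1
        exact card_equiv (indexVectorEquiv _ _) fun A => by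
          simp only [mem_filter, mem_univ, true_and,
            isCCover_and_labelOf_eq_iff hk (mem_filter.mp hx).2]
    _ = stZ n #(labelSupport x) := by
        -- `convert` reconciles the `Fin`-specific decidability instance of `∀ p : Fin n, _`
        convert card_maps_into_insert_onto_eq_stZ hone
        exact (Fintype.card_fin n).symm

theorem natCard_labeling (k ℓ : ℕ) :
    Nat.card {x : ↥(TT k) → Bool // IsLabeling k ℓ x} =
      #{x ∈ {x | Separates k x} | #{t | x t = true} = ℓ} := by
  rw [Nat.card_eq_fintype_card, Fintype.card_subtype, filter_filter]
  rfl

theorem card_ccover_eq_sum_from_ell0_general (n k : ℕ) (hk : 2 ≤ k) :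
    (Nat.card {A : Fin k → Finset (Fin n) // IsCCover n k A} : ℤ) =
      ∑ ℓ ∈ Finset.Icc (ell0 k) (min (2 ^ k - 2) n),
        stZ n ℓ * (Nat.card {x : ↥(TT k) → Bool // IsLabeling k ℓ x} : ℤ) := by
  rw [card_ccover_eq_sum_separates (by omega), sum_comp_eq_sum_mul_card_fiber _ _ _
    (Icc (ell0 k) (min (2 ^ k - 2) n)) fun x hx hℓ => stZ_eq_zero_of_lt ?_]
  · simp_rw [natCard_labeling]
  · have hrange := card_true_mem_Icc (by omega) (mem_filter.mp hx).2
    simp only [mem_Icc, le_min_iff] at hrange hℓ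
    omega

/-- `|C(n,k)| = ∑_{ℓ=ℓ₀(k)}^{min(2^k−2, n)} s̃ℤ(n,ℓ) · |F(k,ℓ)|` in `ℤ`. -/
theorem card_ccover_eq_sum_from_ell0 (n k : ℕ) (hn : 1 ≤ n) (hk : 2 ≤ k) (hkn : k ≤ n) :
    (Nat.card {A : Fin k → Finset (Fin n) // IsCCover n k A} : ℤ) =
      ∑ ℓ ∈ Finset.Icc (ell0 k) (min (2 ^ k - 2) n),
        stZ n ℓ * (Nat.card {x : ↥(TT k) → Bool // IsLabeling k ℓ x} : ℤ) :=
  card_ccover_eq_sum_from_ell0_general n k hk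
end
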